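/- Let p be prime, G = ℤ_{p^{α₁}} ⊕ ⋯ ⊕ ℤ_{p^{α_r}}, h = Σ α_i, s ≥ 0 with p^h > Σ_{j=1}^r p^s(p^{α_j} − 1). Then EGZ_{p^h}^{(p^s)}(G) = p^h + p^s Σ_{j=1}^r (p^{α_j} − 1) = p^h + D^{(p^s)}(G) − p^s. -/

import Mathlib

/-!
Upper bound (polynomial method over `𝔽_p`, on subsets `S` of a sequence of length
`N = p^h + p^s Σ (p^{α_j} - 1)`): by Lucas, `p^β ∣ E` iff `p` divides `C(E, p^k)` for all `k < β`,
so `∏ (1 - C(E(S), p^k)^{p-1})` over the coordinates `E(S)` of `e_{p^s}(S)` and over `E(S) = |S|`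
is the indicator of the sets with `p^{α_j} ∣ e_{p^s}(S)_j` and `p^h ∣ |S|`. As a function on the
cube, `C(Σ_{|T| = q, T ⊆ S} w_T, m)` has degree `q m` (Vandermonde), so the indicator has degree
`Σ p^s (p^{α_j} - 1) + (p^h - 1) < N` and its alternating sum over all `S` vanishes. The empty set
contributes `1`, so some nonempty `S` is counted, and `|S| = p^h` because `N < 2 p^h`.

Lower bound: take `p^h - 1` copies of `(1, …, 1)` and, for each `j`, `p^s (p^{α_j} - 1)` copies of
the vector with `0` in coordinate `j` and `1` elsewhere. A subsequence of length `p^h` contains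
`1 ≤ a ≤ p^s (p^{α_j} - 1)` terms of some block `j`, and its `j`-th coordinate is then
`C(p^h - a, p^s)`, which by Kummer is not divisible by `p^{α_j}`.
-/

open Finset

/-- The `m`-th elementary symmetric expression of the subsequence of `g` selected
by the index set `J`. -/
def eSym {n : ℕ} {R : Type*} [CommRing R] (m : ℕ) (g : Fin n → R) (J : Finset (Fin n)) : R :=
  ∑ T ∈ J.powersetCard m, ∏ i ∈ T, g i

section SetFunctionDegree

variable {R ι : Type*} [CommRing R] [DecidableEq ι]

variable (R) in
def supsetIndicator (T : Finset ι) : Finset ι → R :=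
  fun S => if T ⊆ S then 1 else 0

variable (R ι) in
/-- Reading `S` as a point of the cube `{0,1}^ι`, `supsetIndicator R T` is the monomial
`∏ i ∈ T, x i`, so this is the space of polynomial functions on the cube of degree at most `d`. -/
def setFunDegreeLE (d : ℕ) : Submodule R (Finset ι → R) :=
  Submodule.span R (supsetIndicator R '' {T | #T ≤ d})

lemma supsetIndicator_mem_setFunDegreeLE {T : Finset ι} {d : ℕ} (hT : #T ≤ d) :
    supsetIndicator R T ∈ setFunDegreeLE R ι d :=
  Submodule.subset_span ⟨T, hT, rfl⟩

lemma setFunDegreeLE_mono {d e : ℕ} (h : d ≤ e) : setFunDegreeLE R ι d ≤ setFunDegreeLE R ι e :=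
  Submodule.span_mono (Set.image_mono fun _ hT => le_trans hT h)

lemma const_mem_setFunDegreeLE (c : R) (d : ℕ) :
    (fun _ => c : Finset ι → R) ∈ setFunDegreeLE R ι d := by
  have : (fun _ => c : Finset ι → R) = c • supsetIndicator R ∅ := by
    funext S
    simp [supsetIndicator]
  rw [this]
  exact Submodule.smul_mem _ c (supsetIndicator_mem_setFunDegreeLE (by simp))

lemma supsetIndicator_mul_supsetIndicator (T U : Finset ι) :
    supsetIndicator R T * supsetIndicator R U = supsetIndicator R (T ∪ U) := by
  funext S
  by_cases hT : T ⊆ S <;> by_cases hU : U ⊆ S <;> simp [supsetIndicator, union_subset_iff, hT, hU]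

lemma mul_mem_setFunDegreeLE {d e : ℕ} {f g : Finset ι → R} (hf : f ∈ setFunDegreeLE R ι d)
    (hg : g ∈ setFunDegreeLE R ι e) : f * g ∈ setFunDegreeLE R ι (d + e) := by
  have hfg := Submodule.mul_mem_mul hf hg
  rw [setFunDegreeLE, setFunDegreeLE, Submodule.span_mul_span] at hfg
  refine Submodule.span_mono ?_ hfg
  rintro _ ⟨_, ⟨T, hT, rfl⟩, _, ⟨U, hU, rfl⟩, rfl⟩
  exact ⟨T ∪ U, (card_union_le T U).trans (add_le_add hT hU),
    (supsetIndicator_mul_supsetIndicator (R := R) T U).symm⟩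

lemma pow_mem_setFunDegreeLE {d : ℕ} {f : Finset ι → R} (hf : f ∈ setFunDegreeLE R ι d)
    (k : ℕ) : f ^ k ∈ setFunDegreeLE R ι (k * d) := by
  induction k with
  | zero =>
    rw [pow_zero, zero_mul]
    exact const_mem_setFunDegreeLE (1 : R) 0
  | succ k ih =>
    rw [pow_succ, Nat.succ_mul]
    exact mul_mem_setFunDegreeLE ih hf

lemma prod_mem_setFunDegreeLE {κ : Type*} (I : Finset κ) {d : κ → ℕ} {f : κ → Finset ι → R}
    (hf : ∀ c ∈ I, f c ∈ setFunDegreeLE R ι (d c)) :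
    ∏ c ∈ I, f c ∈ setFunDegreeLE R ι (∑ c ∈ I, d c) := by
  classical
  induction I using Finset.induction_on with
  | empty => exact const_mem_setFunDegreeLE (1 : R) 0
  | insert c I hc ih =>
    rw [prod_insert hc, sum_insert hc]
    exact mul_mem_setFunDegreeLE (hf c (mem_insert_self c I))
      (ih fun c' hc' => hf c' (mem_insert_of_mem hc'))

lemma sum_neg_one_pow_card_mul_supsetIndicator [Fintype ι] {T : Finset ι} (hT : T ≠ univ) :
    ∑ S, (-1 : R) ^ #S * supsetIndicator R T S = 0 := by
  obtain ⟨x, -, hx⟩ := exists_of_ssubset (ssubset_univ_iff.mpr hT)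
  rw [← powerset_univ, ← insert_erase (mem_univ x), sum_powerset_insert (notMem_erase x univ),
    ← sum_add_distrib]
  refine sum_eq_zero fun S hS => ?_
  have hxS : x ∉ S := fun h => notMem_erase x univ (mem_powerset.mp hS h)
  by_cases hTS : T ⊆ S <;>
    simp [supsetIndicator, card_insert_of_notMem hxS, subset_insert_iff_of_notMem hx, hTS, pow_succ]

lemma sum_neg_one_pow_card_mul_eq_zero_of_mem_setFunDegreeLE [Fintype ι] {d : ℕ}
    (hd : d < Fintype.card ι) {f : Finset ι → R} (hf : f ∈ setFunDegreeLE R ι d) :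
    ∑ S, (-1 : R) ^ #S * f S = 0 := by
  induction hf using Submodule.span_induction with
  | mem _ h =>
    obtain ⟨T, hT, rfl⟩ := h
    refine sum_neg_one_pow_card_mul_supsetIndicator (T := T) fun hTu => hd.not_ge ?_
    simpa [hTu] using hT
  | zero => simp
  | add f g _ _ hf hg => simp [mul_add, sum_add_distrib, hf, hg]
  | smul c f _ hf => simp [mul_left_comm _ c, ← mul_sum, hf]

lemma natCast_choose_ite_mem_setFunDegreeLE (A : Finset ι) (w m : ℕ) :
    (fun S => (((if A ⊆ S then w else 0).choose m : ℕ) : R)) ∈ setFunDegreeLE R ι (#A * m) := by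
  cases m with
  | zero => simpa using const_mem_setFunDegreeLE (1 : R) 0
  | succ m =>
    have : (fun S => (((if A ⊆ S then w else 0).choose (m + 1) : ℕ) : R)) =
        ((w.choose (m + 1) : ℕ) : R) • supsetIndicator R A := by
      funext S
      by_cases h : A ⊆ S <;> simp [supsetIndicator, h]
    rw [this]
    exact Submodule.smul_mem _ _
      (supsetIndicator_mem_setFunDegreeLE (Nat.le_mul_of_pos_right _ m.succ_pos))

lemma natCast_choose_sum_ite_mem_setFunDegreeLE {κ : Type*} (A : κ → Finset ι) (w : κ → ℕ)
    {q : ℕ} (I : Finset κ) (hA : ∀ c ∈ I, #(A c) ≤ q) (m : ℕ) :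
    (fun S => (((∑ c ∈ I, if A c ⊆ S then w c else 0).choose m : ℕ) : R)) ∈
      setFunDegreeLE R ι (q * m) := by
  classical
  induction I using Finset.induction_on generalizing m with
  | empty => simpa using const_mem_setFunDegreeLE ((Nat.choose 0 m : ℕ) : R) (q * m)
  | insert c I hc ih =>
    have hsplit : (fun S => (((∑ c' ∈ insert c I, if A c' ⊆ S then w c' else 0).choose m : ℕ) : R))
        = ∑ ab ∈ antidiagonal m,
          (fun S => (((if A c ⊆ S then w c else 0).choose ab.1 : ℕ) : R)) *
          (fun S => (((∑ c' ∈ I, if A c' ⊆ S then w c' else 0).choose ab.2 : ℕ) : R)) := by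
      funext S
      simp [sum_insert hc, Nat.add_choose_eq, Finset.sum_apply]
    rw [hsplit]
    refine Submodule.sum_mem _ fun ab hab => ?_
    rw [← mem_antidiagonal.mp hab, mul_add]
    exact mul_mem_setFunDegreeLE
      (setFunDegreeLE_mono (Nat.mul_le_mul_right _ (hA c (mem_insert_self c I)))
        (natCast_choose_ite_mem_setFunDegreeLE _ _ _))
      (ih (fun c' hc' => hA c' (mem_insert_of_mem hc')) ab.2)

lemma natCast_choose_sum_powersetCard_mem_setFunDegreeLE [Fintype ι] (q : ℕ)
    (w : Finset ι → ℕ) (m : ℕ) :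
    (fun S => (((∑ T ∈ S.powersetCard q, w T).choose m : ℕ) : R)) ∈
      setFunDegreeLE R ι (q * m) := by
  classical
  have hsum : ∀ S : Finset ι, ∑ T ∈ S.powersetCard q, w T =
      ∑ T ∈ univ.powersetCard q, if T ⊆ S then w T else 0 := by
    intro S
    rw [← sum_filter]
    congr 1
    ext T
    simp [mem_powersetCard, and_comm]
  simp_rw [hsum]
  exact natCast_choose_sum_ite_mem_setFunDegreeLE (R := R) id w _
    (fun T hT => (mem_powersetCard.mp hT).2.le) m

end SetFunctionDegree

section Binomial

lemma choose_pow_succ_modEq {p : ℕ} (hp : p.Prime) (M k : ℕ) :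
    M.choose (p ^ (k + 1)) ≡ (M / p).choose (p ^ k) [MOD p] := by
  have := Fact.mk hp
  simpa [pow_succ, hp.pos] using
    Choose.choose_modEq_choose_mod_mul_choose_div_nat (n := M) (k := p ^ (k + 1)) (p := p)

/-- By Lucas, `C(M, p ^ k) ≡ ⌊M / p ^ k⌋ (mod p)`: these binomials read off the base-`p` digits
of `M`. -/
lemma pow_dvd_of_forall_dvd_choose_pow {p : ℕ} (hp : p.Prime) {β M : ℕ}
    (h : ∀ k < β, p ∣ M.choose (p ^ k)) : p ^ β ∣ M := by
  induction β generalizing M with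
  | zero => exact one_dvd M
  | succ β ih =>
    have hM : p ∣ M := by simpa using h 0 β.succ_pos
    have hMp : p ^ β ∣ M / p := ih fun k hk =>
      ((choose_pow_succ_modEq hp M k).dvd_iff dvd_rfl).mp (h (k + 1) (by omega))
    rw [pow_succ']
    exact Nat.mul_dvd_of_dvd_div hM hMp

lemma lt_and_mod_lt_of_pow_le_mod_add_mod {p s i N : ℕ} (hp : 1 < p) (hN : p ^ s ≤ N)
    (hcarry : p ^ i ≤ p ^ s % p ^ i + (N - p ^ s) % p ^ i) : s < i ∧ N % p ^ i < p ^ s := by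
  have hx : (N - p ^ s) % p ^ i < p ^ i := Nat.mod_lt _ (by positivity)
  have hsi : s < i := by
    by_contra! his
    rw [Nat.mod_eq_zero_of_dvd (pow_dvd_pow p his)] at hcarry
    omega
  have hps : p ^ s < p ^ i := Nat.pow_lt_pow_right hp hsi
  rw [Nat.mod_eq_of_lt hps] at hcarry
  refine ⟨hsi, ?_⟩
  rw [show N = (N - p ^ s) + p ^ s by omega, Nat.add_mod, Nat.mod_eq_of_lt hps,
    Nat.mod_eq_sub_mod (by omega), Nat.mod_eq_of_lt (by omega)]
  omega

lemma sub_mod_eq_sub_of_dvd {m M a : ℕ} (hdvd : m ∣ M) (ha : 0 < a) (ham : a ≤ m)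
    (haM : a ≤ M) : (M - a) % m = m - a := by
  obtain ⟨c, rfl⟩ := hdvd
  obtain ⟨c, rfl⟩ := Nat.exists_eq_succ_of_ne_zero (show c ≠ 0 by rintro rfl; omega)
  rw [show m * (c + 1) - a = m * c + (m - a) by rw [mul_add_one]; omega, Nat.mul_add_mod,
    Nat.mod_eq_of_lt (by omega)]

/-- By Kummer, the `p`-adic valuation of the binomial is the number of carries when adding `p ^ s`
to `p ^ h - a - p ^ s` in base `p`, and these occur only at positions strictly between `s` and
`s + α`. -/
theorem not_pow_dvd_choose_pow_sub {p s α h a : ℕ} (hp : p.Prime) (hsα : s + α ≤ h)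
    (ha : 0 < a) (ha' : a ≤ p ^ s * (p ^ α - 1)) : ¬ p ^ α ∣ (p ^ h - a).choose (p ^ s) := by
  have := Fact.mk hp
  have hα : α ≠ 0 := by
    rintro rfl
    simp at ha'
    omega
  have hsαh : p ^ (s + α) ≤ p ^ h := Nat.pow_le_pow_right hp.pos hsα
  have hmul : p ^ s * (p ^ α - 1) + p ^ s = p ^ (s + α) := by
    rw [pow_add, Nat.mul_sub_one, Nat.sub_add_cancel (Nat.le_mul_of_pos_right _ (pow_pos hp.pos α))]
  have hps : 0 < p ^ s := pow_pos hp.pos s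
  have hN : p ^ s ≤ p ^ h - a := by omega
  have hph : p ^ h < p ^ (h + 1) := Nat.pow_lt_pow_right hp.one_lt (by omega)
  have hlog : Nat.log p (p ^ h - a) < h + 1 := Nat.log_lt_of_lt_pow (by omega) (by omega)
  rw [padicValNat_dvd_iff_le (Nat.choose_pos hN).ne', padicValNat_choose hN hlog]
  have hcarries : {i ∈ Ico 1 (h + 1) | p ^ i ≤ p ^ s % p ^ i + (p ^ h - a - p ^ s) % p ^ i}
      ⊆ Ioo s (s + α) := by
    intro i hi
    rw [mem_filter, mem_Ico] at hi
    obtain ⟨hsi, hmod⟩ := lt_and_mod_lt_of_pow_le_mod_add_mod hp.one_lt hN hi.2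
    refine mem_Ioo.mpr ⟨hsi, lt_of_not_ge fun hi' => hmod.not_ge ?_⟩
    have hpi : p ^ (s + α) ≤ p ^ i := Nat.pow_le_pow_right hp.pos hi'
    rw [sub_mod_eq_sub_of_dvd (pow_dvd_pow p (by omega)) ha (by omega) (by omega)]
    omega
  have := card_le_card hcarries
  rw [Nat.card_Ioo] at this
  omega

lemma add_le_of_mul_pow_sub_one_lt {p s α h : ℕ} (hp : 1 < p) (hpos : 0 < p ^ s * (p ^ α - 1))
    (hlt : p ^ s * (p ^ α - 1) < p ^ h) : s + α ≤ h := by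
  have hα : α ≠ 0 := by
    rintro rfl
    simp at hpos
  have hpred : p ^ (α - 1) < p ^ α := Nat.pow_lt_pow_right hp (by omega)
  have : p ^ (s + (α - 1)) < p ^ h := by
    rw [pow_add]
    exact lt_of_le_of_lt (Nat.mul_le_mul_left _ (by omega)) hlt
  have := (Nat.pow_lt_pow_iff_right hp).mp this
  omega

end Binomial

lemma one_sub_pow_sub_one_eq_ite {p : ℕ} [Fact p.Prime] (x : ZMod p) :
    1 - x ^ (p - 1) = if x = 0 then 1 else 0 := by
  split_ifs with hx
  · rw [hx, zero_pow (Nat.sub_ne_zero_of_lt (Fact.out : p.Prime).one_lt), sub_zero]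
  · rw [ZMod.pow_card_sub_one_eq_one hx, sub_self]

theorem exists_nonempty_forall_pow_dvd {ι κ : Type*} [Fintype ι] [DecidableEq ι] [Fintype κ]
    {p : ℕ} (hp : p.Prime) (E : κ → Finset ι → ℕ) (q β : κ → ℕ) (hE : ∀ c, E c ∅ = 0)
    (hdeg : ∀ c k, (fun S => ((E c S).choose (p ^ k) : ZMod p)) ∈
      setFunDegreeLE (ZMod p) ι (q c * p ^ k))
    (hlt : ∑ c, q c * (p ^ β c - 1) < Fintype.card ι) :
    ∃ S : Finset ι, S.Nonempty ∧ ∀ c, p ^ β c ∣ E c S := by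
  classical
  have := Fact.mk hp
  let F : κ → ℕ → Finset ι → ZMod p := fun c k S => ((E c S).choose (p ^ k) : ZMod p)
  let good : Finset ι → Prop := fun S => ∀ c, ∀ k ∈ range (β c), F c k S = 0
  have hgood : (fun S => if good S then (1 : ZMod p) else 0) =
      ∏ c, ∏ k ∈ range (β c), (1 - F c k ^ (p - 1)) := by
    funext S
    simp only [Finset.prod_apply, Pi.sub_apply, Pi.pow_apply, Pi.one_apply,
      one_sub_pow_sub_one_eq_ite, Finset.prod_boole, good, mem_univ, true_imp_iff]
  have hdegree : ∑ c, ∑ k ∈ range (β c), (p - 1) * (q c * p ^ k) = ∑ c, q c * (p ^ β c - 1) := by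
    refine sum_congr rfl fun c _ => ?_
    rw [← geom_sum_mul_of_one_le hp.one_lt.le, sum_mul, mul_sum]
    exact sum_congr rfl fun k _ => by ring
  have hmem : (fun S => if good S then (1 : ZMod p) else 0) ∈
      setFunDegreeLE (ZMod p) ι (∑ c, q c * (p ^ β c - 1)) := by
    rw [hgood, ← hdegree]
    exact prod_mem_setFunDegreeLE _ fun c _ => prod_mem_setFunDegreeLE _ fun k _ =>
      Submodule.sub_mem _ (const_mem_setFunDegreeLE 1 _) (pow_mem_setFunDegreeLE (hdeg c k) _)
  have hsum := sum_neg_one_pow_card_mul_eq_zero_of_mem_setFunDegreeLE hlt hmem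
  by_contra hnone
  have hgood_empty : ∀ S, good S → S = ∅ := fun S hS => not_nonempty_iff_eq_empty.mp fun hne =>
    hnone ⟨S, hne, fun c => pow_dvd_of_forall_dvd_choose_pow hp fun k hk =>
      (ZMod.natCast_eq_zero_iff _ _).mp (hS c k (mem_range.mpr hk))⟩
  rw [sum_eq_single ∅ (fun S _ hS => by rw [if_neg (mt (hgood_empty S) hS), mul_zero])
    (fun h => absurd (mem_univ _) h)] at hsum
  simp [good, F, hE, Nat.choose_eq_zero_of_lt (pow_pos hp.pos _)] at hsum

section ElementarySymmetric

variable {n m : ℕ} {R : Type*} [CommRing R]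

lemma eSym_apply {κ : Type*} {A : κ → Type*} [∀ j, CommRing (A j)] (g : Fin n → ∀ j, A j)
    (J : Finset (Fin n)) (j : κ) : eSym m g J j = eSym m (fun i => g i j) J := by
  simp [eSym, Finset.sum_apply, Finset.prod_apply]

lemma eSym_map {n' : ℕ} (e : Fin n ↪ Fin n') (g : Fin n' → R) (J : Finset (Fin n)) :
    eSym m g (J.map e) = eSym m (g ∘ e) J := by
  simp [eSym, powersetCard_map, sum_map, prod_map]

lemma eSym_eq_eSym_sdiff {g : Fin n → R} {A : Finset (Fin n)} (hA : ∀ i ∈ A, g i = 0)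
    (J : Finset (Fin n)) : eSym m g J = eSym m g (J \ A) := by
  refine (sum_subset (powersetCard_mono sdiff_subset) fun T hT hT' => ?_).symm
  rw [mem_powersetCard] at hT
  obtain ⟨i, hiT, hiA⟩ : ∃ i ∈ T, i ∈ A := by
    by_contra! h
    exact hT' (mem_powersetCard.mpr ⟨fun i hi => mem_sdiff.mpr ⟨hT.1 hi, h i hi⟩, hT.2⟩)
  exact prod_eq_zero hiT (hA i hiA)

lemma eSym_eq_choose_of_forall_eq_one {g : Fin n → R} {J : Finset (Fin n)}
    (hJ : ∀ i ∈ J, g i = 1) : eSym m g J = ((#J).choose m : R) := by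
  rw [eSym, sum_congr rfl fun T hT => prod_eq_one fun i hi => hJ i ((mem_powersetCard.mp hT).1 hi),
    sum_const, card_powersetCard, nsmul_one]

lemma eSym_eq_natCast_sum_prod_val {b : ℕ} [NeZero b] (g : Fin n → ZMod b) (J : Finset (Fin n)) :
    eSym m g J = ((∑ T ∈ J.powersetCard m, ∏ i ∈ T, (g i).val : ℕ) : ZMod b) := by
  simp [eSym]

end ElementarySymmetric

theorem exists_card_eq_eSym_eq_zero {p r h s : ℕ} (hp : p.Prime) (α : Fin r → ℕ)
    (hbig : ∑ j, p ^ s * (p ^ α j - 1) < p ^ h)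
    (g : Fin (p ^ h + p ^ s * ∑ j, (p ^ α j - 1)) → ∀ j, ZMod (p ^ α j)) :
    ∃ J, #J = p ^ h ∧ eSym (p ^ s) g J = 0 := by
  let E : Option (Fin r) → Finset (Fin (p ^ h + p ^ s * ∑ j, (p ^ α j - 1))) → ℕ := fun o S =>
    o.elim #S fun j => ∑ T ∈ S.powersetCard (p ^ s), ∏ i ∈ T, (g i j).val
  have hE : ∀ o, E o ∅ = 0 := by
    rintro (_ | j)
    · rfl
    · simp [E, (pow_pos hp.pos s).ne]
  have hdeg : ∀ o k, (fun S => ((E o S).choose (p ^ k) : ZMod p)) ∈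
      setFunDegreeLE (ZMod p) _ (o.elim 1 (fun _ => p ^ s) * p ^ k) := by
    rintro (_ | j) k
    · simpa [E] using natCast_choose_sum_powersetCard_mem_setFunDegreeLE (R := ZMod p)
        (ι := Fin (p ^ h + p ^ s * ∑ j, (p ^ α j - 1))) 1 (fun _ => 1) (p ^ k)
    · exact natCast_choose_sum_powersetCard_mem_setFunDegreeLE _ _ _
  have hbound : ∑ o : Option (Fin r), o.elim 1 (fun _ => p ^ s) * (p ^ o.elim h α - 1) <
      Fintype.card (Fin (p ^ h + p ^ s * ∑ j, (p ^ α j - 1))) := by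
    have := Nat.one_le_pow h p hp.pos
    simp only [Fintype.sum_option, Option.elim, one_mul, Fintype.card_fin, mul_sum]
    omega
  obtain ⟨S, hSne, hS⟩ := exists_nonempty_forall_pow_dvd hp E _ _ hE hdeg hbound
  refine ⟨S, Nat.eq_of_dvd_of_lt_two_mul (card_pos.mpr hSne).ne' (hS none) ?_, funext fun j => ?_⟩
  · have := card_le_univ S
    simp only [Fintype.card_fin, mul_sum] at this
    omega
  · have : NeZero (p ^ α j) := ⟨(pow_pos hp.pos _).ne'⟩
    rw [eSym_apply, eSym_eq_natCast_sum_prod_val, Pi.zero_apply, ZMod.natCast_eq_zero_iff]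
    exact hS (some j)

theorem eSym_ne_zero_of_card_fiber_le {p r n h s : ℕ} (hp : p.Prime) (α : Fin r → ℕ)
    (hbig : ∑ j, p ^ s * (p ^ α j - 1) < p ^ h) (lab : Fin n → Option (Fin r))
    (hnone : #{i | lab i = none} < p ^ h)
    (hsome : ∀ j, #{i | lab i = some j} ≤ p ^ s * (p ^ α j - 1))
    {J : Finset (Fin n)} (hJ : #J = p ^ h) :
    eSym (p ^ s) (fun i j => (if lab i = some j then 0 else 1 : ZMod (p ^ α j))) J ≠ 0 := by
  intro hzero
  obtain ⟨i₀, hi₀, j, hj⟩ : ∃ i ∈ J, ∃ j, lab i = some j := by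
    by_contra! h
    have : J ⊆ ({i | lab i = none} : Finset (Fin n)) := fun i hi =>
      mem_filter.mpr ⟨mem_univ _, Option.eq_none_iff_forall_ne_some.mpr (h i hi)⟩
    exact (card_le_card this).not_gt (hJ ▸ hnone)
  set A : Finset (Fin n) := {i | lab i = some j}
  have ha : 0 < #(A ∩ J) := card_pos.mpr ⟨i₀, mem_inter.mpr ⟨by simp [A, hj], hi₀⟩⟩
  have ha' : #(A ∩ J) ≤ p ^ s * (p ^ α j - 1) := (card_le_card inter_subset_left).trans (hsome j)
  have hjh : p ^ s * (p ^ α j - 1) < p ^ h := lt_of_le_of_lt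
    (single_le_sum (f := fun j => p ^ s * (p ^ α j - 1)) (fun _ _ => Nat.zero_le _) (mem_univ j))
    hbig
  have hcoord := congr_fun hzero j
  rw [eSym_apply, eSym_eq_eSym_sdiff (A := A) (fun i hi => by simp [A] at hi; simp [hi]),
    eSym_eq_choose_of_forall_eq_one (fun i hi => by simp [A] at hi; simp [hi.2]), card_sdiff, hJ,
    Pi.zero_apply, ZMod.natCast_eq_zero_iff] at hcoord
  exact not_pow_dvd_choose_pow_sub hp
    (add_le_of_mul_pow_sub_one_lt hp.one_lt (ha.trans_le ha') hjh) ha ha' hcoord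

lemma exists_card_fiber_eq {κ : Type*} [Fintype κ] [DecidableEq κ] (c : κ → ℕ) :
    ∃ f : Fin (∑ k, c k) → κ, ∀ k, #{i | f i = k} = c k := by
  let e : (Σ k, Fin (c k)) ≃ Fin (∑ k, c k) := Fintype.equivFinOfCardEq (by simp)
  refine ⟨fun i => (e.symm i).1, fun k => ?_⟩
  rw [← Fintype.card_subtype]
  exact (Fintype.card_congr ((e.symm.subtypeEquiv fun _ => Iff.rfl).trans
    (Equiv.sigmaSubtype k))).trans (Fintype.card_fin _)

theorem stmt_14_general (p : ℕ) (hp : p.Prime) (r : ℕ) (α : Fin r → ℕ)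
    (s : ℕ) (hbig : ∑ j, p ^ s * (p ^ α j - 1) < p ^ (∑ j, α j)) :
    IsLeast {z : ℕ | ∀ n : ℕ, z ≤ n → ∀ g : Fin n → (∀ j : Fin r, ZMod (p ^ α j)),
        ∃ J : Finset (Fin n), J.card = p ^ (∑ j, α j) ∧ eSym (p ^ s) g J = 0}
      (p ^ (∑ j, α j) + p ^ s * ∑ j, (p ^ α j - 1)) := by
  constructor
  · intro n hn g
    obtain ⟨J, hJ, hzero⟩ := exists_card_eq_eSym_eq_zero hp α hbig (g ∘ Fin.castLE hn)
    exact ⟨J.map (Fin.castLEEmb hn), by rw [card_map, hJ], by rwa [eSym_map]⟩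
  · intro z hz
    by_contra! hlt
    have hph := Nat.one_le_pow (∑ j, α j) p hp.pos
    obtain ⟨lab, hlab⟩ := exists_card_fiber_eq fun o : Option (Fin r) =>
      o.elim (p ^ (∑ j, α j) - 1) fun j => p ^ s * (p ^ α j - 1)
    obtain ⟨J, hJ, hzero⟩ := hz _ (by simp [Fintype.sum_option, mul_sum] at hlt ⊢; omega)
      fun i j => if lab i = some j then 0 else 1
    exact eSym_ne_zero_of_card_fiber_le hp α hbig lab (by simp [hlab]; omega)
      (fun j => (hlab (some j)).le) hJ hzero

theorem stmt_14 (p : ℕ) (hp : p.Prime) (r : ℕ) (α : Fin r → ℕ) (hα : ∀ j, 1 ≤ α j)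
    (s : ℕ) (hbig : ∑ j, p ^ s * (p ^ α j - 1) < p ^ (∑ j, α j)) :
    IsLeast {z : ℕ | ∀ n : ℕ, z ≤ n → ∀ g : Fin n → (∀ j : Fin r, ZMod (p ^ α j)),
        ∃ J : Finset (Fin n), J.card = p ^ (∑ j, α j) ∧ eSym (p ^ s) g J = 0}
      (p ^ (∑ j, α j) + p ^ s * ∑ j, (p ^ α j - 1)) :=
  stmt_14_general p hp r α s hbig
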